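/- Fix N ≥ 2 and h ∈ (0,1) with h/(1-h) ≤ C(2N-1,N)·(1/2)^{N-1}. The function U(q) = -h(1-q)^N + (1-h)·(P[Binom(2N,q) < N] + (1/2)P[Binom(2N,q) = N]) on [0,1/2] attains its maximum at q* = (h/((1-h)·C(2N-1,N)))^{1/(N-1)}. -/

import Mathlib

/-!
Differentiating the binomial distribution function telescopes:
`d/dq P[Binom(n+1, q) ≤ m] = -(n+1) P[Binom(n, q) = m]`. Hence
`U'(q) = N (1-q)^(N-1) (h - (1-h) C(2N-1,N) q^(N-1))`, which is nonnegative on `[0, q*]` and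
nonpositive on `[q*, 1]`, and the hypothesis on `h` is exactly `q* ≤ 1/2`.
-/

/-- The probability mass function of a binomial random variable with `n` trials
and success probability `p`, evaluated at `k`. -/
noncomputable def binomPMF (n : ℕ) (p : ℝ) (k : ℕ) : ℝ :=
  (n.choose k : ℝ) * p ^ k * (1 - p) ^ (n - k)

/-- The principal's expected payoff from noise level `q`, when a fraction `h`
of agents are hackers:
U(q) = -h(1-q)^N + (1-h)(P[Binom(2N,q) < N] + (1/2)P[Binom(2N,q) = N]). -/
noncomputable def principalPayoff (N : ℕ) (h : ℝ) (q : ℝ) : ℝ :=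
  -h * (1 - q) ^ N
    + (1 - h) * ((∑ k ∈ Finset.range N, binomPMF (2*N) q k)
        + (1/2) * binomPMF (2*N) q N)

open Finset Set

theorem hasDerivAt_one_sub_pow (n : ℕ) (q : ℝ) :
    HasDerivAt (fun p : ℝ => (1 - p) ^ n) (-(n * (1 - q) ^ (n - 1))) q :=
  ((hasDerivAt_pow n (1 - q)).comp q ((hasDerivAt_id q).const_sub 1)).congr_deriv (by ring)

theorem hasDerivAt_binomPMF_succ (n k : ℕ) (q : ℝ) :
    HasDerivAt (fun p => binomPMF (n + 1) p (k + 1))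
      ((n + 1) * (binomPMF n q k - binomPMF n q (k + 1))) q := by
  have hpow : HasDerivAt (fun p : ℝ => p ^ (k + 1)) ((k + 1) * q ^ k) q := by
    simpa using hasDerivAt_pow (k + 1) q
  refine (((hpow.mul (hasDerivAt_one_sub_pow (n - k) q)).const_mul
    ((n + 1).choose (k + 1) : ℝ)).congr_deriv ?_).congr_of_eventuallyEq
    (.of_forall fun p => ?_)
  · have hk : ((n + 1 : ℕ) : ℝ) * n.choose k = (n + 1).choose (k + 1) * (k + 1) := by
      exact_mod_cast Nat.add_one_mul_choose_eq n k
    have hnk : (n.choose (k + 1) : ℝ) * (n + 1) = (n + 1).choose (k + 1) * (n - k : ℕ) := by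
      rw [← Nat.add_sub_add_right n 1 k]
      exact_mod_cast Nat.choose_mul_succ_eq n (k + 1)
    simp only [binomPMF, show n - (k + 1) = n - k - 1 by omega]
    push_cast at hk
    linear_combination q ^ (k + 1) * (1 - q) ^ (n - k - 1) * hnk
      - q ^ k * (1 - q) ^ (n - k) * hk
  · simp [binomPMF, mul_assoc]

theorem hasDerivAt_sum_range_binomPMF (n m : ℕ) (q : ℝ) :
    HasDerivAt (fun p => ∑ k ∈ range (m + 1), binomPMF (n + 1) p k)
      (-(n + 1) * binomPMF n q m) q := by
  induction m with
  | zero =>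
    refine ((hasDerivAt_one_sub_pow (n + 1) q).congr_deriv ?_).congr_of_eventuallyEq
      (.of_forall fun p => ?_)
    · simp [binomPMF]
      ring
    · simp [binomPMF]
  | succ m ih =>
    simp only [sum_range_succ _ (m + 1)]
    exact (ih.add (hasDerivAt_binomPMF_succ n m q)).congr_deriv (by ring)

theorem hasDerivAt_principalPayoff {N : ℕ} (hN : 1 ≤ N) (h q : ℝ) :
    HasDerivAt (principalPayoff N h)
      (N * (1 - q) ^ (N - 1) * (h - (1 - h) * (2 * N - 1).choose N * q ^ (N - 1))) q := by
  obtain ⟨n, rfl⟩ : ∃ n, N = n + 1 := ⟨N - 1, by omega⟩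
  have h2N : 2 * (n + 1) = 2 * n + 1 + 1 := by ring
  have hS := hasDerivAt_sum_range_binomPMF (2 * n + 1) n q
  have hM := hasDerivAt_binomPMF_succ (2 * n + 1) n q
  refine ((((hasDerivAt_one_sub_pow (n + 1) q).const_mul (-h)).add
    ((hS.add (hM.const_mul (1 / 2))).const_mul (1 - h))).congr_deriv ?_).congr_of_eventuallyEq
    (.of_forall fun p => ?_)
  · simp only [binomPMF, h2N, Nat.add_sub_cancel, Nat.choose_symm_half,
      show 2 * n + 1 - n = n + 1 by omega, show 2 * n + 1 - (n + 1) = n by omega]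
    push_cast
    ring
  · simp only [principalPayoff, h2N]
    rfl

theorem isMaxOn_principalPayoff {N : ℕ} (hN : 1 ≤ N) {h q₀ : ℝ} (hh : h ≤ 1)
    (hq₀ : q₀ ∈ Icc (0 : ℝ) 1)
    (hcrit : (1 - h) * (2 * N - 1).choose N * q₀ ^ (N - 1) = h) :
    IsMaxOn (principalPayoff N h) (Icc 0 1) q₀ := by
  have hderiv (x : ℝ) : deriv (principalPayoff N h) x = N * (1 - x) ^ (N - 1)
      * ((1 - h) * (2 * N - 1).choose N) * (q₀ ^ (N - 1) - x ^ (N - 1)) := by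
    rw [(hasDerivAt_principalPayoff hN h x).deriv]
    linear_combination -(N * (1 - x) ^ (N - 1)) * hcrit
  have hcont (x : ℝ) : ContinuousAt (principalPayoff N h) x :=
    (hasDerivAt_principalPayoff hN h x).continuousAt
  have hdiff (s : Set ℝ) : DifferentiableOn ℝ (principalPayoff N h) s := fun x _ =>
    (hasDerivAt_principalPayoff hN h x).differentiableAt.differentiableWithinAt
  have hfactor {x : ℝ} (hx : x ≤ 1) :
      0 ≤ N * (1 - x) ^ (N - 1) * ((1 - h) * (2 * N - 1).choose N) := by
    have : 0 ≤ 1 - x := by linarith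
    have : 0 ≤ 1 - h := by linarith
    positivity
  refine isMaxOn_Icc_of_deriv (hcont _) (hcont _) (hcont _) (hdiff _) (hdiff _) ?_ ?_
  · rintro x ⟨hx0, hxq⟩
    rw [hderiv]
    exact mul_nonneg (hfactor (by linarith [hq₀.2]))
      (sub_nonneg.2 (pow_le_pow_left₀ hx0.le hxq.le _))
  · rintro x ⟨hqx, hx1⟩
    rw [hderiv]
    exact mul_nonpos_of_nonneg_of_nonpos (hfactor hx1.le)
      (sub_nonpos.2 (pow_le_pow_left₀ hq₀.1 hqx.le _))

/-- If h/(1-h) ≤ C(2N-1,N) (1/2)^{N-1}, then U attains its maximum on [0,1/2]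
at q* = (h/((1-h) C(2N-1,N)))^{1/(N-1)}. -/
theorem stmt_3 (N : ℕ) (hN : 2 ≤ N) (h : ℝ) (hh : h ∈ Set.Ioo (0:ℝ) 1)
    (hcond : h / (1 - h) ≤ ((2*N-1).choose N : ℝ) * (1/2) ^ (N-1)) :
    let qstar : ℝ := (h / ((1 - h) * ((2*N-1).choose N : ℝ))) ^ ((1:ℝ)/(N-1))
    qstar ∈ Set.Icc (0:ℝ) (1/2) ∧
      ∀ q ∈ Set.Icc (0:ℝ) (1/2), principalPayoff N h q ≤ principalPayoff N h qstar := by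
  obtain ⟨hh0, hh1⟩ := hh
  intro qstar
  set C : ℝ := ((2 * N - 1).choose N : ℝ)
  have hC : 0 < C := Nat.cast_pos.2 (Nat.choose_pos (by omega))
  have h1h : 0 < 1 - h := by linarith
  have hA : 0 ≤ h / ((1 - h) * C) := by positivity
  have hpow : qstar ^ (N - 1) = h / ((1 - h) * C) := by
    have hexp : (1 : ℝ) / (N - 1) = ((N - 1 : ℕ) : ℝ)⁻¹ := by
      rw [Nat.cast_sub (by omega), Nat.cast_one, one_div]
    show ((h / ((1 - h) * C)) ^ ((1 : ℝ) / (N - 1))) ^ (N - 1) = _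
    rw [hexp, Real.rpow_inv_natCast_pow hA (by omega)]
  have hq0 : 0 ≤ qstar := Real.rpow_nonneg hA _
  have hq_half : qstar ≤ 1 / 2 := by
    rw [← pow_le_pow_iff_left₀ hq0 (by norm_num) (by omega : N - 1 ≠ 0), hpow, ← div_div,
      div_le_iff₀ hC, mul_comm]
    exact hcond
  have hcrit : (1 - h) * C * qstar ^ (N - 1) = h := by
    rw [hpow]
    field_simp
  refine ⟨⟨hq0, hq_half⟩, isMaxOn_iff.1 ?_⟩
  exact (isMaxOn_principalPayoff (by omega) hh1.le ⟨hq0, by linarith⟩ hcrit).on_subset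
    (Icc_subset_Icc_right (by norm_num))
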